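/- Let l : S → S be a left translation of a semigroup (S, *), i.e., l(x * y) = l(x) * y for all x, y. Then the operation x *_l y := x * l(y) is associative and (S, *_l) is an interassociate of (S, *). -/

import Mathlib

section LeftTranslation

variable {S : Type*} {m : S → S → S} {l : S → S}

def leftTranslateMul (m : S → S → S) (l : S → S) (x y : S) : S :=
  m x (l y)

theorem mul_leftTranslateMul (m_assoc : ∀ x y z, m (m x y) z = m x (m y z)) (x y z : S) :
    leftTranslateMul m l (m x y) z = m x (leftTranslateMul m l y z) :=
  m_assoc x y (l z)

theorem leftTranslateMul_mul (m_assoc : ∀ x y z, m (m x y) z = m x (m y z))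
    (hl : ∀ x y, l (m x y) = m (l x) y) (x y z : S) :
    m (leftTranslateMul m l x y) z = leftTranslateMul m l x (m y z) := by
  rw [leftTranslateMul, leftTranslateMul, m_assoc, hl]

theorem leftTranslateMul_assoc (m_assoc : ∀ x y z, m (m x y) z = m x (m y z))
    (hl : ∀ x y, l (m x y) = m (l x) y) (x y z : S) :
    leftTranslateMul m l (leftTranslateMul m l x y) z =
      leftTranslateMul m l x (leftTranslateMul m l y z) :=
  leftTranslateMul_mul m_assoc hl x y (l z)

end LeftTranslation

theorem left_translation_gives_interassociate {S : Type*} (m : S → S → S)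
    (m_assoc : ∀ x y z, m (m x y) z = m x (m y z))
    (l : S → S) (hl : ∀ x y, l (m x y) = m (l x) y) :
    (∀ x y z, m (m x (l y)) (l z) = m x (l (m y (l z)))) ∧
    (∀ x y z, m (m x y) (l z) = m x (m y (l z))) ∧
    (∀ x y z, m (m x (l y)) z = m x (l (m y z))) :=
  ⟨leftTranslateMul_assoc m_assoc hl, mul_leftTranslateMul m_assoc,
    leftTranslateMul_mul m_assoc hl⟩
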